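/- Union bound on bad codebooks: Fix ε > 0, β₁ > 0, and β₂ > 0, and suppose the probability under the n-fold product Q_{U,V}^n that (U^n, V^n) ∉ A_ε is at most 2^{−β₁ n}. Let 𝒮 be the set of codebooks 𝒞 such that (i) ∑_{v^n} P_{𝒞,2}(v^n) < 2 · 2^{−β₁ n}, (ii) D_{𝒞,1}(v^n) < 1 + 2^{−β₂ n} for all v^n with Q_{V^n}(v^n) > 0, and (iii) D_{𝒞,2}(v^n) < (max_{v : Q_V(v) > 0} 1/Q_V(v))^n for all v^n with Q_{V^n}(v^n) > 0. Then the probability (over the i.i.d. draw of the codebook) that 𝒞 ∉ 𝒮 is at most exp(−(1/3) 2^{n(R − β₁)}) + |𝒱|^n exp(−(1/3) 2^{n(R − I_Q(U;V) − ε − 2β₂)}). -/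

import Mathlib

open scoped BigOperators Classical
open Finset

noncomputable section SoftCovering

/-- The `n`-fold i.i.d. extension of a pmf `Q`. -/
def prodPMF {U : Type} (Q : U → ℝ) (n : ℕ) : (Fin n → U) → ℝ :=
  fun x => ∏ i, Q (x i)

/-- The `n`-fold memoryless extension of a channel `W`. -/
def prodChannel {U V : Type} (W : U → V → ℝ) (n : ℕ) : (Fin n → U) → (Fin n → V) → ℝ :=
  fun x y => ∏ i, W (x i) (y i)

/-- Output marginal `Q_V(v) = ∑ u, Q_U(u) Q_{V|U}(v|u)`. -/
def outputMarginal {U V : Type} [Fintype U] (Q : U → ℝ) (W : U → V → ℝ) : V → ℝ :=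
  fun v => ∑ u, Q u * W u v

/-- Relative entropy (KL divergence) in bits, summed over the support of `P`. -/
def klDiv {X : Type} [Fintype X] (P Q : X → ℝ) : ℝ :=
  ∑ x, if 0 < P x then P x * Real.logb 2 (P x / Q x) else 0

/-- Mutual information in bits: `I_Q(U;V) = d(Q_{U,V}, Q_U × Q_V)`. -/
def mutualInfo {U V : Type} [Fintype U] [Fintype V] (Q : U → ℝ) (W : U → V → ℝ) : ℝ :=
  klDiv (fun p : U × V => Q p.1 * W p.1 p.2)
        (fun p : U × V => Q p.1 * outputMarginal Q W p.2)

/-- The jointly typical set `A_ε`. -/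
def typicalSet {U V : Type} [Fintype U] [Fintype V] (Q : U → ℝ) (W : U → V → ℝ)
    (n : ℕ) (ε : ℝ) : Set ((Fin n → U) × (Fin n → V)) :=
  {p | (1 / (n : ℝ)) * Real.logb 2
      (prodChannel W n p.1 p.2 / prodPMF (outputMarginal Q W) n p.2)
      ≤ mutualInfo Q W + ε}

/-- Probability weight of a particular codebook under i.i.d. codeword generation. -/
def cbProb {U : Type} (Q : U → ℝ) (n M : ℕ) (C : Fin M → Fin n → U) : ℝ :=
  ∏ m, prodPMF Q n (C m)

/-- Probability, over the random codebook, of the event `S`. -/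
def cbP {U : Type} [Fintype U] (Q : U → ℝ) (n M : ℕ)
    (S : (Fin M → Fin n → U) → Prop) : ℝ :=
  ∑ C : Fin M → Fin n → U, if S C then cbProb Q n M C else 0

/-- Expectation, over the random codebook, of `f`. -/
def cbE {U : Type} [Fintype U] (Q : U → ℝ) (n M : ℕ)
    (f : (Fin M → Fin n → U) → ℝ) : ℝ :=
  ∑ C : Fin M → Fin n → U, cbProb Q n M C * f C

/-- The induced output distribution `P_{V^n|𝒞}`. -/
def inducedDist {U V : Type} (W : U → V → ℝ) (n M : ℕ) (C : Fin M → Fin n → U) :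
    (Fin n → V) → ℝ :=
  fun y => (M : ℝ)⁻¹ * ∑ m, prodChannel W n (C m) y

/-- The typical part `P_{𝒞,1}` of the induced distribution. -/
def PC1 {U V : Type} [Fintype U] [Fintype V] (Q : U → ℝ) (W : U → V → ℝ) (n M : ℕ)
    (ε : ℝ) (C : Fin M → Fin n → U) : (Fin n → V) → ℝ :=
  fun y => (M : ℝ)⁻¹ *
    ∑ m, if (C m, y) ∈ typicalSet Q W n ε then prodChannel W n (C m) y else 0

/-- The atypical part `P_{𝒞,2}` of the induced distribution. -/
def PC2 {U V : Type} [Fintype U] [Fintype V] (Q : U → ℝ) (W : U → V → ℝ) (n M : ℕ)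
    (ε : ℝ) (C : Fin M → Fin n → U) : (Fin n → V) → ℝ :=
  fun y => (M : ℝ)⁻¹ *
    ∑ m, if (C m, y) ∉ typicalSet Q W n ε then prodChannel W n (C m) y else 0

/-- Density `D_{𝒞,1}` of `P_{𝒞,1}` with respect to `Q_{V^n}`. -/
def DC1 {U V : Type} [Fintype U] [Fintype V] (Q : U → ℝ) (W : U → V → ℝ) (n M : ℕ)
    (ε : ℝ) (C : Fin M → Fin n → U) : (Fin n → V) → ℝ :=
  fun y => PC1 Q W n M ε C y / prodPMF (outputMarginal Q W) n y

/-- Density `D_{𝒞,2}` of `P_{𝒞,2}` with respect to `Q_{V^n}`. -/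
def DC2 {U V : Type} [Fintype U] [Fintype V] (Q : U → ℝ) (W : U → V → ℝ) (n M : ℕ)
    (ε : ℝ) (C : Fin M → Fin n → U) : (Fin n → V) → ℝ :=
  fun y => PC2 Q W n M ε C y / prodPMF (outputMarginal Q W) n y

/-- `max_{v : Q_V(v) > 0} 1 / Q_V(v)`. -/
def maxInvQV {U V : Type} [Fintype U] (Q : U → ℝ) (W : U → V → ℝ) : ℝ :=
  sSup ((fun v => (outputMarginal Q W v)⁻¹) '' {v | 0 < outputMarginal Q W v})

/-- Rényi divergence of order `α` in bits. -/
def renyiDiv {X : Type} [Fintype X] (α : ℝ) (P Q : X → ℝ) : ℝ :=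
  (α - 1)⁻¹ * Real.logb 2 (∑ x, P x ^ α * Q x ^ (1 - α))

/-- Binary entropy function in bits. -/
def binEnt (x : ℝ) : ℝ := -(x * Real.logb 2 x) - (1 - x) * Real.logb 2 (1 - x)

/-- `P` is a probability mass function. -/
def IsPMF {X : Type} [Fintype X] (P : X → ℝ) : Prop :=
  (∀ x, 0 ≤ P x) ∧ ∑ x, P x = 1

/-- Probability that an i.i.d. pair sequence from `Q_{U,V}` is not jointly typical. -/
def atypProb {U V : Type} [Fintype U] [Fintype V] (Q : U → ℝ) (W : U → V → ℝ)
    (n : ℕ) (ε : ℝ) : ℝ :=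
  ∑ x : Fin n → U, ∑ y : Fin n → V,
    if (x, y) ∉ typicalSet Q W n ε then ∏ i, Q (x i) * W (x i) (y i) else 0

end SoftCovering

/-!
Split the bad event into "(i) or (iii) fails" and "(ii) fails".

For (ii), fix an output `y`: `D_{𝒞,1}(y)` is the empirical mean of `M` i.i.d. variables with mean
at most `1` which, on the typical set, are bounded by `2^{n(I+ε)}`. A multiplicative Chernoff
bound and a union bound over the `|𝒱|^n` outputs give the second term.

For (i), `∑_y P_{𝒞,2}(y)` is the empirical mean of the atypical masses of the codewords, i.i.d.
in `[0, 1]` with mean `P[(U^n, V^n) ∉ A_ε] ≤ 2^{-β₁n}`, and Chernoff gives the first term.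
Condition (iii) can only fail at an output `y` that every codeword produces with probability one
while being atypical with it, because `P_{𝒞,2}(y) ≤ 1 ≤ Q_{V^n}(y) (max 1/Q_V)^n`. Then
`∑_y P_{𝒞,2}(y) ≥ 1`, so (iii) fails only together with (i) unless `2 · 2^{-β₁n} > 1`. In that
last case the atypicality of a codeword producing `y` surely forces `Q_{V^n}(y) < 1`, so `Q_V` is
not a point mass, `max 1/Q_V ≥ 2` and `Q_{V^n}(y) ≤ 1/2`. The failure of (iii) then has
probability at most `∑_y Q_{V^n}(y)^M ≤ 2^{-(M-1)} ≤ e^{-M/3}`, as `M ≥ 2`.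
-/

section Average

variable {M : ℕ} {f : Fin M → ℝ}

lemma mul_le_sum_of_le_inv_mul {c : ℝ} (h : c ≤ (M : ℝ)⁻¹ * ∑ m, f m) : c * M ≤ ∑ m, f m := by
  rcases M.eq_zero_or_pos with rfl | hM
  · simp
  · rw [mul_comm]
    exact (le_inv_mul_iff₀ (by exact_mod_cast hM)).1 h

lemma inv_mul_sum_le_one (hf : ∀ m, f m ≤ 1) : (M : ℝ)⁻¹ * ∑ m, f m ≤ 1 := by
  rcases M.eq_zero_or_pos with rfl | hM
  · simp
  · refine (inv_mul_le_one₀ (by exact_mod_cast hM)).2 ?_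
    simpa using sum_le_sum fun m (_ : m ∈ univ) => hf m

lemma forall_eq_one_of_one_le_inv_mul_sum (hf : ∀ m, f m ≤ 1)
    (h : 1 ≤ (M : ℝ)⁻¹ * ∑ m, f m) : 0 < M ∧ ∀ m, f m = 1 := by
  refine ⟨Nat.pos_of_ne_zero fun hM => by subst hM; norm_num at h, fun m => ?_⟩
  by_contra hm
  have hlt := sum_lt_sum (fun m _ => hf m) ⟨m, mem_univ m, lt_of_le_of_ne (hf m) hm⟩
  have hge := mul_le_sum_of_le_inv_mul h
  simp at hlt
  linarith

end Average

section IID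

variable {X : Type} [Fintype X]

noncomputable def iidProb (p : X → ℝ) (M : ℕ) (S : (Fin M → X) → Prop) : ℝ :=
  ∑ C : Fin M → X, if S C then ∏ m, p (C m) else 0

variable {p : X → ℝ} {M : ℕ}

lemma iidProb_mono (hp : ∀ x, 0 ≤ p x) {S T : (Fin M → X) → Prop} (h : ∀ C, S C → T C) :
    iidProb p M S ≤ iidProb p M T :=
  sum_le_sum fun C _ => by
    have hC := prod_nonneg fun m (_ : m ∈ univ) => hp (C m)
    by_cases hS : S C
    · simp [hS, h C hS]
    · split_ifs <;> simp [hC]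

lemma iidProb_eq_zero {S : (Fin M → X) → Prop} (hS : ∀ C, ¬ S C) : iidProb p M S = 0 :=
  sum_eq_zero fun C _ => if_neg (hS C)

lemma iidProb_or_le (hp : ∀ x, 0 ≤ p x) (S T : (Fin M → X) → Prop) :
    iidProb p M (fun C => S C ∨ T C) ≤ iidProb p M S + iidProb p M T := by
  rw [iidProb, iidProb, iidProb, ← sum_add_distrib]
  refine sum_le_sum fun C _ => ?_
  have hC := prod_nonneg fun m (_ : m ∈ univ) => hp (C m)
  split_ifs <;> simp_all

lemma iidProb_exists_le (hp : ∀ x, 0 ≤ p x) {ι : Type} [Fintype ι]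
    (S : ι → (Fin M → X) → Prop) :
    iidProb p M (fun C => ∃ i, S i C) ≤ ∑ i, iidProb p M (S i) := by
  simp only [iidProb]
  rw [sum_comm]
  refine sum_le_sum fun C _ => ?_
  have hC := prod_nonneg fun m (_ : m ∈ univ) => hp (C m)
  have hterm : ∀ i, 0 ≤ if S i C then ∏ m, p (C m) else 0 := fun i => by
    split_ifs <;> simp [hC]
  split_ifs with h
  · obtain ⟨i, hi⟩ := h
    exact (if_pos hi).symm.le.trans (single_le_sum (fun j _ => hterm j) (mem_univ i))
  · exact sum_nonneg fun j _ => hterm j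

lemma iidProb_forall (T : X → Prop) [DecidablePred T] :
    iidProb p M (fun C => ∀ m, T (C m)) = (∑ x, if T x then p x else 0) ^ M := by
  rw [Fintype.sum_pow, iidProb]
  exact sum_congr rfl fun C _ => by simp [Fintype.prod_ite_zero]

end IID

section Chernoff

open Real

variable {X : Type} [Fintype X] {p : X → ℝ} {M : ℕ}

lemma exp_mul_le_one_add_mul {θ s : ℝ} (hθ0 : 0 ≤ θ) (hθ1 : θ ≤ 1) :
    exp (θ * s) ≤ 1 + θ * (exp s - 1) := by
  have h := convexOn_exp.2 (Set.mem_univ s) (Set.mem_univ 0) hθ0 (sub_nonneg.2 hθ1) (by ring)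
  simp only [smul_eq_mul, mul_zero, add_zero, exp_zero, mul_one] at h
  linarith

lemma iidProb_le_exp_mul_pow (hp : ∀ x, 0 ≤ p x) (φ : X → ℝ) (a : ℝ) {t : ℝ} (ht : 0 ≤ t) :
    iidProb p M (fun C => a ≤ ∑ m, φ (C m))
      ≤ exp (-(t * a)) * (∑ x, p x * exp (t * φ x)) ^ M := by
  rw [Fintype.sum_pow, mul_sum]
  refine sum_le_sum fun C _ => ?_
  rw [prod_mul_distrib, ← exp_sum, ← mul_assoc, mul_comm (exp _), mul_assoc, ← exp_add]
  have hC := prod_nonneg fun m (_ : m ∈ univ) => hp (C m)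
  split_ifs with h
  · refine le_mul_of_one_le_right hC (one_le_exp ?_)
    rw [← mul_sum]
    nlinarith
  · positivity

lemma sum_mul_exp_le_exp (hp : IsPMF p) {φ : X → ℝ} {b μ t : ℝ} (hb : 0 < b)
    (hφ0 : ∀ x, 0 ≤ φ x) (hφb : ∀ x, φ x ≤ b) (hμ : ∑ x, p x * φ x ≤ μ) (ht : 0 ≤ t) :
    ∑ x, p x * exp (t * φ x) ≤ exp (μ / b * (exp (t * b) - 1)) := by
  have hchord : ∀ x, exp (t * φ x) ≤ 1 + φ x / b * (exp (t * b) - 1) := fun x => by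
    have := exp_mul_le_one_add_mul (s := t * b) (div_nonneg (hφ0 x) hb.le)
      ((div_le_one hb).2 (hφb x))
    rwa [div_mul_eq_mul_div, mul_div_assoc, mul_div_cancel_right₀ _ hb.ne', mul_comm] at this
  have hexp : 0 ≤ exp (t * b) - 1 := by linarith [one_le_exp (mul_nonneg ht hb.le)]
  calc ∑ x, p x * exp (t * φ x)
      ≤ ∑ x, p x * (1 + φ x / b * (exp (t * b) - 1)) :=
        sum_le_sum fun x _ => mul_le_mul_of_nonneg_left (hchord x) (hp.1 x)
    _ = 1 + (exp (t * b) - 1) / b * ∑ x, p x * φ x := by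
        simp only [mul_add, mul_one, sum_add_distrib, hp.2, mul_sum]
        congr 1
        exact sum_congr rfl fun x _ => by ring
    _ ≤ 1 + μ / b * (exp (t * b) - 1) := by
        have := mul_le_mul_of_nonneg_left hμ (div_nonneg hexp hb.le)
        linarith [show (exp (t * b) - 1) / b * μ = μ / b * (exp (t * b) - 1) by ring]
    _ ≤ exp (μ / b * (exp (t * b) - 1)) := by linarith [add_one_le_exp (μ / b * (exp (t * b) - 1))]

theorem iidProb_chernoff (hp : IsPMF p) {φ : X → ℝ} {b μ δ : ℝ} (hb : 0 < b)
    (hφ0 : ∀ x, 0 ≤ φ x) (hφb : ∀ x, φ x ≤ b) (hμ : ∑ x, p x * φ x ≤ μ)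
    (hδ0 : 0 ≤ δ) (hδ1 : δ ≤ 1) :
    iidProb p M (fun C => (1 + δ) * M * μ ≤ ∑ m, φ (C m))
      ≤ exp (-(δ ^ 2 * M * μ / (3 * b))) := by
  have hμ0 : 0 ≤ μ := (sum_nonneg fun x _ => mul_nonneg (hp.1 x) (hφ0 x)).trans hμ
  -- the optimal tilt is `log (1 + δ) / b`; `2 δ / (3 b)` already gives the rate `δ² / 3`
  set t := 2 * δ / (3 * b) with ht
  have htb : t * b = 2 / 3 * δ := by rw [ht]; field_simp
  have hgrowth : exp (t * b) - 1 ≤ 2 / 3 * δ + 1 / 3 * δ ^ 2 := by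
    have h := exp_bound' (x := t * b) (by positivity) (by linarith) (n := 2) (by norm_num)
    norm_num [sum_range_succ, Nat.factorial] at h
    rw [htb] at h ⊢
    nlinarith
  calc iidProb p M (fun C => (1 + δ) * M * μ ≤ ∑ m, φ (C m))
      ≤ exp (-(t * ((1 + δ) * M * μ))) * (∑ x, p x * exp (t * φ x)) ^ M :=
        iidProb_le_exp_mul_pow hp.1 φ _ (by positivity)
    _ ≤ exp (-(t * ((1 + δ) * M * μ))) * exp (μ / b * (exp (t * b) - 1)) ^ M := by
        gcongr
        · exact sum_nonneg fun x _ => mul_nonneg (hp.1 x) (exp_nonneg _)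
        · exact sum_mul_exp_le_exp hp hb hφ0 hφb hμ (by positivity)
    _ = exp (M * μ / b * (exp (t * b) - 1) - t * ((1 + δ) * M * μ)) := by
        rw [← exp_nat_mul, ← exp_add]
        ring_nf
    _ ≤ exp (-(δ ^ 2 * M * μ / (3 * b))) := by
        refine exp_le_exp.2 ?_
        have := mul_le_mul_of_nonneg_left hgrowth (by positivity : (0 : ℝ) ≤ M * μ / b)
        have : t * ((1 + δ) * M * μ) = M * μ / b * (2 / 3 * δ * (1 + δ)) := by
          rw [ht]; field_simp
        have : δ ^ 2 * M * μ / (3 * b) = M * μ / b * (δ ^ 2 / 3) := by field_simp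
        nlinarith

lemma half_pow_pred_le_exp (hM : 2 ≤ M) : (1 / 2 : ℝ) ^ (M - 1) ≤ exp (-(M / 3)) := by
  rw [← exp_log (by positivity : (0 : ℝ) < (1 / 2) ^ (M - 1)), log_pow, one_div, log_inv,
    Nat.cast_sub (by omega : 1 ≤ M), exp_le_exp]
  have h2 : (2 : ℝ) ≤ M := by exact_mod_cast hM
  nlinarith [log_two_gt_d9]

end Chernoff

section Channel

open Real

variable {U V : Type} {Q : U → ℝ} {W : U → V → ℝ}

lemma IsPMF.le_one {X : Type} [Fintype X] {P : X → ℝ} (hP : IsPMF P) (x : X) : P x ≤ 1 :=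
  hP.2 ▸ single_le_sum (fun y _ => hP.1 y) (mem_univ x)

lemma prodPMF_nonneg (hQ : ∀ u, 0 ≤ Q u) (n : ℕ) (x : Fin n → U) : 0 ≤ prodPMF Q n x :=
  prod_nonneg fun i _ => hQ (x i)

lemma IsPMF.prodPMF [Fintype U] (hQ : IsPMF Q) (n : ℕ) : IsPMF (prodPMF Q n) :=
  ⟨prodPMF_nonneg hQ.1 n, (Fintype.prod_sum fun _ u => Q u).symm.trans (by simp [hQ.2])⟩

lemma prodChannel_nonneg [Fintype V] (hW : ∀ u, IsPMF (W u)) (n : ℕ) (x : Fin n → U)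
    (y : Fin n → V) : 0 ≤ prodChannel W n x y :=
  prod_nonneg fun i _ => (hW (x i)).1 (y i)

lemma prodChannel_le_one [Fintype V] (hW : ∀ u, IsPMF (W u)) (n : ℕ) (x : Fin n → U)
    (y : Fin n → V) : prodChannel W n x y ≤ 1 :=
  prod_le_one (fun i _ => (hW (x i)).1 (y i)) fun i _ => (hW (x i)).le_one (y i)

lemma sum_prodChannel [Fintype V] (hW : ∀ u, IsPMF (W u)) (n : ℕ) (x : Fin n → U) :
    ∑ y, prodChannel W n x y = 1 := by
  simp [prodChannel, ← Fintype.prod_sum, fun u => (hW u).2]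

lemma isPMF_outputMarginal [Fintype U] [Fintype V] (hQ : IsPMF Q) (hW : ∀ u, IsPMF (W u)) :
    IsPMF (outputMarginal Q W) :=
  ⟨fun v => sum_nonneg fun u _ => mul_nonneg (hQ.1 u) ((hW u).1 v), by
    simp [outputMarginal, sum_comm (γ := V), ← mul_sum, fun u => (hW u).2, hQ.2]⟩

lemma sum_prodPMF_mul_prodChannel [Fintype U] (n : ℕ) (y : Fin n → V) :
    ∑ x, prodPMF Q n x * prodChannel W n x y = prodPMF (outputMarginal Q W) n y := by
  simp only [prodPMF, prodChannel, outputMarginal, ← prod_mul_distrib]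
  exact (Fintype.prod_sum fun i u => Q u * W u (y i)).symm

lemma sub_div_log_two_le_mul_logb_div {a b : ℝ} (ha : 0 < a) (hb : 0 < b) :
    (a - b) / log 2 ≤ a * logb 2 (a / b) := by
  have h := one_sub_inv_le_log_of_pos (div_pos ha hb)
  rw [logb, ← mul_div_assoc, div_le_div_iff_of_pos_right (log_pos one_lt_two)]
  rw [inv_div] at h
  have := mul_le_mul_of_nonneg_left h ha.le
  rwa [mul_sub, mul_one, mul_div_cancel₀ _ ha.ne'] at this

lemma klDiv_nonneg {X : Type} [Fintype X] {P R : X → ℝ} (hP : ∑ x, P x = 1)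
    (hR0 : ∀ x, 0 ≤ R x) (hR : ∑ x, R x ≤ 1) (hPR : ∀ x, 0 < P x → 0 < R x) :
    0 ≤ klDiv P R := by
  have hterm : ∀ x, (P x - R x) / log 2
      ≤ if 0 < P x then P x * logb 2 (P x / R x) else 0 := fun x => by
    split_ifs with hx
    · exact sub_div_log_two_le_mul_logb_div hx (hPR x hx)
    · exact div_nonpos_of_nonpos_of_nonneg (by linarith [hR0 x]) (log_pos one_lt_two).le
  calc (0 : ℝ) ≤ (∑ x, P x - ∑ x, R x) / log 2 := div_nonneg (by linarith) (log_pos one_lt_two).le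
    _ = ∑ x, (P x - R x) / log 2 := by rw [← sum_sub_distrib, sum_div]
    _ ≤ klDiv P R := sum_le_sum fun x _ => hterm x

lemma mutualInfo_nonneg [Fintype U] [Fintype V] (hQ : IsPMF Q) (hW : ∀ u, IsPMF (W u)) :
    0 ≤ mutualInfo Q W := by
  have hQV := isPMF_outputMarginal hQ hW
  refine klDiv_nonneg ?_ (fun p => mul_nonneg (hQ.1 p.1) (hQV.1 p.2)) ?_ fun p hp => ?_
  · simp [Fintype.sum_prod_type, ← mul_sum, fun u => (hW u).2, hQ.2]
  · simp [Fintype.sum_prod_type, ← mul_sum, hQV.2, hQ.2]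
  · have hQp : 0 < Q p.1 := pos_of_mul_pos_left hp ((hW p.1).1 p.2)
    have : Q p.1 * W p.1 p.2 ≤ outputMarginal Q W p.2 :=
      single_le_sum (f := fun u => Q u * W u p.2)
        (fun u _ => mul_nonneg (hQ.1 u) ((hW u).1 p.2)) (mem_univ p.1)
    exact mul_pos hQp (hp.trans_le this)

end Channel

section SoftCoveringLemmas

open Real

variable {U V : Type} [Fintype U] [Fintype V] {Q : U → ℝ} {W : U → V → ℝ} {n M : ℕ} {ε : ℝ}

lemma cbP_eq_iidProb (S : (Fin M → Fin n → U) → Prop) :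
    cbP Q n M S = iidProb (prodPMF Q n) M S := rfl

noncomputable def atypicalMass (Q : U → ℝ) (W : U → V → ℝ) (n : ℕ) (ε : ℝ) (x : Fin n → U) : ℝ :=
  ∑ y, if (x, y) ∉ typicalSet Q W n ε then prodChannel W n x y else 0

lemma atypicalMass_nonneg (hW : ∀ u, IsPMF (W u)) (x : Fin n → U) :
    0 ≤ atypicalMass Q W n ε x :=
  sum_nonneg fun y _ => by split_ifs <;> simp [prodChannel_nonneg hW]

lemma atypicalMass_le_one (hW : ∀ u, IsPMF (W u)) (x : Fin n → U) :
    atypicalMass Q W n ε x ≤ 1 :=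
  (sum_prodChannel hW n x).symm ▸ sum_le_sum fun y _ => by
    split_ifs <;> simp [prodChannel_nonneg hW]

lemma sum_prodPMF_mul_atypicalMass :
    ∑ x, prodPMF Q n x * atypicalMass Q W n ε x = atypProb Q W n ε := by
  simp only [atypicalMass, atypProb, mul_sum, mul_ite, mul_zero, prodPMF, prodChannel,
    prod_mul_distrib]

lemma sum_PC2 (C : Fin M → Fin n → U) :
    ∑ y, PC2 Q W n M ε C y = (M : ℝ)⁻¹ * ∑ m, atypicalMass Q W n ε (C m) := by
  simp only [PC2, atypicalMass, ← mul_sum]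
  rw [sum_comm]

lemma PC2_nonneg (hW : ∀ u, IsPMF (W u)) (C : Fin M → Fin n → U) (y : Fin n → V) :
    0 ≤ PC2 Q W n M ε C y :=
  mul_nonneg (by positivity) (sum_nonneg fun m _ => by
    split_ifs <;> simp [prodChannel_nonneg hW])

lemma PC2_le_one (hW : ∀ u, IsPMF (W u)) (C : Fin M → Fin n → U) (y : Fin n → V) :
    PC2 Q W n M ε C y ≤ 1 :=
  inv_mul_sum_le_one fun m => by split_ifs <;> simp [prodChannel_le_one hW]

lemma sum_PC2_le_one (hW : ∀ u, IsPMF (W u)) (C : Fin M → Fin n → U) :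
    ∑ y, PC2 Q W n M ε C y ≤ 1 :=
  (sum_PC2 C).trans_le (inv_mul_sum_le_one fun m => atypicalMass_le_one hW (C m))

lemma one_le_mul_maxInvQV {v : V} (hv : 0 < outputMarginal Q W v) :
    1 ≤ outputMarginal Q W v * maxInvQV Q W := by
  have : (outputMarginal Q W v)⁻¹ ≤ maxInvQV Q W :=
    le_csSup (Set.toFinite _).bddAbove ⟨v, hv, rfl⟩
  rwa [← inv_mul_le_iff₀ hv, mul_one]

lemma outputMarginal_pos_of_prodPMF_pos (hQ : IsPMF Q) (hW : ∀ u, IsPMF (W u))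
    {y : Fin n → V} (hy : 0 < prodPMF (outputMarginal Q W) n y) (i : Fin n) :
    0 < outputMarginal Q W (y i) :=
  ((isPMF_outputMarginal hQ hW).1 (y i)).lt_of_ne' ((prod_ne_zero_iff.1 hy.ne') i (mem_univ i))

lemma one_le_prodPMF_mul_maxInvQV_pow (hQ : IsPMF Q) (hW : ∀ u, IsPMF (W u))
    {y : Fin n → V} (hy : 0 < prodPMF (outputMarginal Q W) n y) :
    1 ≤ prodPMF (outputMarginal Q W) n y * maxInvQV Q W ^ n := by
  rw [prodPMF, ← Fin.prod_const, ← prod_mul_distrib]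
  exact one_le_prod fun i _ =>
    one_le_mul_maxInvQV (outputMarginal_pos_of_prodPMF_pos hQ hW hy i)

lemma two_le_maxInvQV (hQ : IsPMF Q) (hW : ∀ u, IsPMF (W u)) {v : V}
    (hv0 : 0 < outputMarginal Q W v) (hv1 : outputMarginal Q W v < 1) : 2 ≤ maxInvQV Q W := by
  have hQV := isPMF_outputMarginal hQ hW
  -- `v` is not alone in the support, and two points of the support cannot both exceed `1/2`
  obtain ⟨w, hwv, hw⟩ : ∃ w, w ≠ v ∧ 0 < outputMarginal Q W w := by
    by_contra! h
    have := hQV.2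
    rw [← add_sum_erase _ _ (mem_univ v),
      sum_eq_zero fun w hw => le_antisymm (h w (ne_of_mem_erase hw)) (hQV.1 w)] at this
    linarith
  have hsum : outputMarginal Q W v + outputMarginal Q W w ≤ 1 := by
    rw [← sum_pair hwv.symm, ← hQV.2]
    exact sum_le_sum_of_subset_of_nonneg (subset_univ _) fun x _ _ => hQV.1 x
  have hv := one_le_mul_maxInvQV hv0
  have hw := one_le_mul_maxInvQV hw
  nlinarith

lemma prodPMF_lt_one_of_notMem_typicalSet (hI : 0 ≤ mutualInfo Q W + ε)
    {x : Fin n → U} {y : Fin n → V} (hx : (x, y) ∉ typicalSet Q W n ε)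
    (hW1 : prodChannel W n x y = 1) : prodPMF (outputMarginal Q W) n y < 1 := by
  by_contra! h
  refine hx ?_
  show (1 / (n : ℝ)) * logb 2 (prodChannel W n x y / prodPMF (outputMarginal Q W) n y) ≤ _
  rw [hW1]
  have : logb 2 (1 / prodPMF (outputMarginal Q W) n y) ≤ 0 :=
    logb_nonpos one_lt_two (by positivity) ((div_le_one (by linarith)).2 h)
  nlinarith [show (0 : ℝ) ≤ 1 / n by positivity]

lemma prodChannel_le_of_mem_typicalSet {x : Fin n → U} {y : Fin n → V}
    (hy : 0 < prodPMF (outputMarginal Q W) n y) (hx : (x, y) ∈ typicalSet Q W n ε) :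
    prodChannel W n x y ≤ 2 ^ (n * (mutualInfo Q W + ε)) * prodPMF (outputMarginal Q W) n y := by
  rcases n.eq_zero_or_pos with rfl | hn
  · simp [prodChannel, prodPMF]
  rcases le_or_gt (prodChannel W n x y) 0 with h0 | h0
  · exact h0.trans (by positivity)
  rw [← div_le_iff₀ hy, ← logb_le_iff_le_rpow one_lt_two (div_pos h0 hy)]
  have hx : (1 / (n : ℝ)) * logb 2 (prodChannel W n x y / prodPMF (outputMarginal Q W) n y)
      ≤ mutualInfo Q W + ε := hx
  rwa [one_div, inv_mul_le_iff₀ (by exact_mod_cast hn)] at hx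

end SoftCoveringLemmas

section BadCodebooks

open Real

variable {U V : Type} [Fintype U] [Fintype V] {Q : U → ℝ} {W : U → V → ℝ} {n M : ℕ} {ε : ℝ}

lemma cbP_two_mul_le_sum_PC2_le (hQ : IsPMF Q) (hW : ∀ u, IsPMF (W u)) {μ : ℝ}
    (hμ : atypProb Q W n ε ≤ μ) :
    cbP Q n M (fun C => 2 * μ ≤ ∑ y, PC2 Q W n M ε C y) ≤ exp (-(M * μ / 3)) := by
  have h := iidProb_chernoff (M := M) (hQ.prodPMF n) one_pos (atypicalMass_nonneg hW)
    (atypicalMass_le_one hW) (sum_prodPMF_mul_atypicalMass.trans_le hμ) zero_le_one le_rfl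
  rw [cbP_eq_iidProb]
  refine (iidProb_mono (hQ.prodPMF n).1 fun C hC => ?_).trans (h.trans_eq (by ring_nf))
  rw [sum_PC2] at hC
  linarith [mul_le_sum_of_le_inv_mul hC]

lemma one_le_PC2_of_maxInvQV_pow_le_DC2 (hQ : IsPMF Q) (hW : ∀ u, IsPMF (W u))
    {C : Fin M → Fin n → U} {y : Fin n → V} (hy : 0 < prodPMF (outputMarginal Q W) n y)
    (hD : maxInvQV Q W ^ n ≤ DC2 Q W n M ε C y) : 1 ≤ PC2 Q W n M ε C y := by
  rw [DC2, le_div_iff₀ hy] at hD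
  linarith [one_le_prodPMF_mul_maxInvQV_pow hQ hW hy]

lemma forall_notMem_typicalSet_of_maxInvQV_pow_le_DC2 (hQ : IsPMF Q) (hW : ∀ u, IsPMF (W u))
    {C : Fin M → Fin n → U} {y : Fin n → V} (hy : 0 < prodPMF (outputMarginal Q W) n y)
    (hD : maxInvQV Q W ^ n ≤ DC2 Q W n M ε C y) :
    0 < M ∧ ∀ m, (C m, y) ∉ typicalSet Q W n ε ∧ prodChannel W n (C m) y = 1 := by
  obtain ⟨hM, hall⟩ := forall_eq_one_of_one_le_inv_mul_sum
    (fun m => by split_ifs <;> simp [prodChannel_le_one hW])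
    (one_le_PC2_of_maxInvQV_pow_le_DC2 hQ hW hy hD)
  refine ⟨hM, fun m => ?_⟩
  have := hall m
  by_cases hm : (C m, y) ∈ typicalSet Q W n ε
  · simp [hm] at this
  · simp only [hm, not_false_eq_true, if_true] at this
    exact ⟨hm, this⟩

lemma prodPMF_le_half_of_maxInvQV_pow_le_DC2 (hQ : IsPMF Q) (hW : ∀ u, IsPMF (W u))
    (hI : 0 ≤ mutualInfo Q W + ε) {C : Fin M → Fin n → U} {y : Fin n → V}
    (hy : 0 < prodPMF (outputMarginal Q W) n y) (hD : maxInvQV Q W ^ n ≤ DC2 Q W n M ε C y) :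
    prodPMF (outputMarginal Q W) n y ≤ 1 / 2 := by
  obtain ⟨hM, hsure⟩ := forall_notMem_typicalSet_of_maxInvQV_pow_le_DC2 hQ hW hy hD
  have hlt := prodPMF_lt_one_of_notMem_typicalSet hI (hsure ⟨0, hM⟩).1 (hsure ⟨0, hM⟩).2
  obtain ⟨i, hi⟩ : ∃ i, outputMarginal Q W (y i) < 1 := by
    by_contra! h
    exact hlt.not_ge (one_le_prod fun i _ => h i)
  have hmax := two_le_maxInvQV hQ hW (outputMarginal_pos_of_prodPMF_pos hQ hW hy i) hi
  have hn : 1 ≤ n := Nat.pos_of_ne_zero fun h => by subst h; simp [prodPMF] at hlt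
  have hbound : prodPMF (outputMarginal Q W) n y * maxInvQV Q W ^ n ≤ 1 := by
    rw [DC2, le_div_iff₀ hy] at hD
    linarith [PC2_le_one (Q := Q) (ε := ε) hW C y]
  have : (2 : ℝ) ≤ maxInvQV Q W ^ n := hmax.trans (le_self_pow₀ (by linarith) (by omega))
  nlinarith

lemma cbP_maxInvQV_pow_le_DC2_le (hQ : IsPMF Q) (hW : ∀ u, IsPMF (W u))
    (hI : 0 ≤ mutualInfo Q W + ε) (y : Fin n → V) :
    cbP Q n M (fun C => 0 < prodPMF (outputMarginal Q W) n y ∧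
        maxInvQV Q W ^ n ≤ DC2 Q W n M ε C y)
      ≤ prodPMF (outputMarginal Q W) n y * (1 / 2) ^ (M - 1) := by
  set q := prodPMF (outputMarginal Q W) n y with hq_def
  have hq0 : 0 ≤ q := prodPMF_nonneg (isPMF_outputMarginal hQ hW).1 n y
  rw [cbP_eq_iidProb]
  by_cases hne : ∃ C : Fin M → Fin n → U, 0 < q ∧ maxInvQV Q W ^ n ≤ DC2 Q W n M ε C y
  swap
  · rw [iidProb_eq_zero fun C hC => hne ⟨C, hC⟩]
    positivity
  obtain ⟨C₀, hy, hD⟩ := hne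
  obtain ⟨hM, -⟩ := forall_notMem_typicalSet_of_maxInvQV_pow_le_DC2 hQ hW hy hD
  have hq := prodPMF_le_half_of_maxInvQV_pow_le_DC2 hQ hW hI hy hD
  have hsure : ∑ x, (if (x, y) ∉ typicalSet Q W n ε ∧ prodChannel W n x y = 1
      then prodPMF Q n x else 0) ≤ q := by
    rw [hq_def, ← sum_prodPMF_mul_prodChannel]
    refine sum_le_sum fun x _ => ?_
    split_ifs with h
    · rw [h.2, mul_one]
    · exact mul_nonneg (prodPMF_nonneg hQ.1 n x) (prodChannel_nonneg hW n x y)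
  calc iidProb (prodPMF Q n) M (fun C => 0 < q ∧ maxInvQV Q W ^ n ≤ DC2 Q W n M ε C y)
      ≤ iidProb (prodPMF Q n) M (fun C => ∀ m,
          (C m, y) ∉ typicalSet Q W n ε ∧ prodChannel W n (C m) y = 1) :=
        iidProb_mono (hQ.prodPMF n).1 fun C hC =>
          (forall_notMem_typicalSet_of_maxInvQV_pow_le_DC2 hQ hW hC.1 hC.2).2
    _ ≤ q ^ M := by
        refine (iidProb_forall
          (fun x => (x, y) ∉ typicalSet Q W n ε ∧ prodChannel W n x y = 1)).trans_le ?_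
        exact pow_le_pow_left₀ (sum_nonneg fun x _ => by split_ifs <;> simp [prodPMF_nonneg hQ.1])
          hsure M
    _ = q * q ^ (M - 1) := by rw [← pow_succ', Nat.sub_add_cancel hM]
    _ ≤ q * (1 / 2) ^ (M - 1) := by gcongr

lemma cbP_exists_maxInvQV_pow_le_DC2_le (hQ : IsPMF Q) (hW : ∀ u, IsPMF (W u))
    (hI : 0 ≤ mutualInfo Q W + ε) :
    cbP Q n M (fun C => ∃ y, 0 < prodPMF (outputMarginal Q W) n y ∧
        maxInvQV Q W ^ n ≤ DC2 Q W n M ε C y) ≤ (1 / 2) ^ (M - 1) := by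
  rw [cbP_eq_iidProb]
  refine (iidProb_exists_le (hQ.prodPMF n).1 _).trans ?_
  calc ∑ y, _ ≤ ∑ y, prodPMF (outputMarginal Q W) n y * (1 / 2) ^ (M - 1) :=
        sum_le_sum fun y _ => cbP_maxInvQV_pow_le_DC2_le hQ hW hI y
    _ = (1 / 2) ^ (M - 1) := by
        rw [← sum_mul, ((isPMF_outputMarginal hQ hW).prodPMF n).2, one_mul]

lemma cbP_one_add_le_DC1_le (hQ : IsPMF Q) (hW : ∀ u, IsPMF (W u)) {δ : ℝ} (hδ0 : 0 ≤ δ)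
    (hδ1 : δ ≤ 1) (y : Fin n → V) :
    cbP Q n M (fun C => 0 < prodPMF (outputMarginal Q W) n y ∧ 1 + δ ≤ DC1 Q W n M ε C y)
      ≤ exp (-(δ ^ 2 * M / (3 * 2 ^ (n * (mutualInfo Q W + ε))))) := by
  rw [cbP_eq_iidProb]
  by_cases hy : 0 < prodPMF (outputMarginal Q W) n y
  swap
  · rw [iidProb_eq_zero fun C hC => hy hC.1]
    positivity
  set φ : (Fin n → U) → ℝ := fun x =>
    (if (x, y) ∈ typicalSet Q W n ε then prodChannel W n x y else 0) /
      prodPMF (outputMarginal Q W) n y with hφ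
  have hφ0 : ∀ x, 0 ≤ φ x := fun x =>
    div_nonneg (by split_ifs <;> simp [prodChannel_nonneg hW]) hy.le
  have hφB : ∀ x, φ x ≤ 2 ^ (n * (mutualInfo Q W + ε)) := fun x => by
    rw [hφ, div_le_iff₀ hy]
    split_ifs with hx
    · exact prodChannel_le_of_mem_typicalSet hy hx
    · positivity
  have hEφ : ∑ x, prodPMF Q n x * φ x ≤ 1 := by
    simp only [hφ, mul_div_assoc', ← sum_div]
    rw [div_le_one hy, ← sum_prodPMF_mul_prodChannel]
    refine sum_le_sum fun x _ => mul_le_mul_of_nonneg_left ?_ (prodPMF_nonneg hQ.1 n x)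
    split_ifs <;> simp [prodChannel_nonneg hW]
  have hDC1 : ∀ C, DC1 Q W n M ε C y = (M : ℝ)⁻¹ * ∑ m, φ (C m) := fun C => by
    simp only [DC1, PC1, hφ, mul_div_assoc, sum_div]
  refine (iidProb_mono (hQ.prodPMF n).1 fun C hC => ?_).trans
    ((iidProb_chernoff (hQ.prodPMF n) (by positivity) hφ0 hφB hEφ hδ0 hδ1).trans_eq
      (by rw [mul_one]))
  rw [hDC1] at hC
  linarith [mul_le_sum_of_le_inv_mul hC.2]

lemma cbP_not_forall_DC1_lt_le (hQ : IsPMF Q) (hW : ∀ u, IsPMF (W u)) {δ : ℝ} (hδ0 : 0 ≤ δ)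
    (hδ1 : δ ≤ 1) :
    cbP Q n M (fun C => ¬ ∀ y, 0 < prodPMF (outputMarginal Q W) n y →
        DC1 Q W n M ε C y < 1 + δ)
      ≤ (Fintype.card V : ℝ) ^ n *
          exp (-(δ ^ 2 * M / (3 * 2 ^ (n * (mutualInfo Q W + ε))))) := by
  rw [cbP_eq_iidProb]
  refine (iidProb_mono (hQ.prodPMF n).1 fun C hC => ?_).trans
    ((iidProb_exists_le (hQ.prodPMF n).1 fun y C =>
      0 < prodPMF (outputMarginal Q W) n y ∧ 1 + δ ≤ DC1 Q W n M ε C y).trans ?_)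
  · push Not at hC
    exact hC
  · refine (sum_le_sum fun y _ => cbP_one_add_le_DC1_le hQ hW hδ0 hδ1 y).trans_eq ?_
    simp

lemma cbP_not_sum_PC2_lt_or_not_forall_DC2_lt_le (hQ : IsPMF Q) (hW : ∀ u, IsPMF (W u))
    (hI : 0 ≤ mutualInfo Q W + ε) {μ : ℝ} (hμ : atypProb Q W n ε ≤ μ) (hμ1 : μ ≤ 1)
    (hM : 0 < n → 2 ≤ M) :
    cbP Q n M (fun C => ¬ (∑ y, PC2 Q W n M ε C y < 2 * μ) ∨
        ¬ ∀ y, 0 < prodPMF (outputMarginal Q W) n y →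
          DC2 Q W n M ε C y < maxInvQV Q W ^ n)
      ≤ exp (-(M * μ / 3)) := by
  have hDC2 : ∀ C, (¬ ∀ y, 0 < prodPMF (outputMarginal Q W) n y →
      DC2 Q W n M ε C y < maxInvQV Q W ^ n) →
      ∃ y, 0 < prodPMF (outputMarginal Q W) n y ∧ maxInvQV Q W ^ n ≤ DC2 Q W n M ε C y :=
    fun C h => by push Not at h; exact h
  rw [cbP_eq_iidProb]
  -- a failure of (iii) puts atypical mass `≥ 1` on one output, hence also fails (i) if `2μ ≤ 1`
  by_cases h2μ : 2 * μ ≤ 1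
  · refine (iidProb_mono (hQ.prodPMF n).1 fun C hC => ?_).trans
      (cbP_two_mul_le_sum_PC2_le hQ hW hμ)
    rcases hC with hC | hC
    · exact not_lt.1 hC
    · obtain ⟨y, hy, hD⟩ := hDC2 C hC
      exact h2μ.trans ((one_le_PC2_of_maxInvQV_pow_le_DC2 hQ hW hy hD).trans
        (single_le_sum (fun y _ => PC2_nonneg hW C y) (mem_univ y)))
  refine (iidProb_mono (hQ.prodPMF n).1
    (T := fun C => ∃ y, 0 < prodPMF (outputMarginal Q W) n y ∧
      maxInvQV Q W ^ n ≤ DC2 Q W n M ε C y) fun C hC => ?_).trans ?_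
  · rcases hC with hC | hC
    · exact absurd ((sum_PC2_le_one hW C).trans_lt (not_le.1 h2μ)) hC
    · exact hDC2 C hC
  rcases n.eq_zero_or_pos with rfl | hn
  · rw [iidProb_eq_zero fun C ⟨y, hy, hD⟩ => by
      have := prodPMF_le_half_of_maxInvQV_pow_le_DC2 hQ hW hI hy hD
      norm_num [prodPMF] at this]
    positivity
  calc _ ≤ (1 / 2 : ℝ) ^ (M - 1) := cbP_exists_maxInvQV_pow_le_DC2_le hQ hW hI
    _ ≤ exp (-(M / 3)) := half_pow_pred_le_exp (hM hn)
    _ ≤ exp (-(M * μ / 3)) := by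
        gcongr
        exact mul_le_of_le_one_right (Nat.cast_nonneg M) hμ1

end BadCodebooks

/-- **Union bound on bad codebooks.** If the atypicality probability is at most `2^{-β₁ n}`,
then the probability that the random codebook fails any of the three goodness conditions
is at most `exp(−(1/3)2^{n(R−β₁)}) + |𝒱|^n exp(−(1/3)2^{n(R−I_Q(U;V)−ε−2β₂)})`. -/
theorem union_bound_bad_codebooks {U V : Type} [Fintype U] [Fintype V]
    (Q : U → ℝ) (W : U → V → ℝ) (hQ : IsPMF Q) (hW : ∀ u, IsPMF (W u))
    (R : ℝ) (hR0 : 0 < R) (ε : ℝ) (hε : 0 < ε)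
    (β₁ : ℝ) (hβ₁ : 0 < β₁) (β₂ : ℝ) (hβ₂ : 0 < β₂) (n : ℕ)
    (hatyp : atypProb Q W n ε ≤ (2 : ℝ) ^ (-(β₁ * n))) :
    cbP Q n ⌈(2 : ℝ) ^ ((n : ℝ) * R)⌉₊
      (fun C => ¬ (
        (∑ y : Fin n → V, PC2 Q W n ⌈(2 : ℝ) ^ ((n : ℝ) * R)⌉₊ ε C y
            < 2 * (2 : ℝ) ^ (-(β₁ * n))) ∧
        (∀ y : Fin n → V, 0 < prodPMF (outputMarginal Q W) n y →
          DC1 Q W n ⌈(2 : ℝ) ^ ((n : ℝ) * R)⌉₊ ε C y < 1 + (2 : ℝ) ^ (-(β₂ * n))) ∧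
        (∀ y : Fin n → V, 0 < prodPMF (outputMarginal Q W) n y →
          DC2 Q W n ⌈(2 : ℝ) ^ ((n : ℝ) * R)⌉₊ ε C y < (maxInvQV Q W) ^ n)))
      ≤ Real.exp (-(1 / 3) * (2 : ℝ) ^ ((n : ℝ) * (R - β₁)))
        + (Fintype.card V : ℝ) ^ n *
            Real.exp (-(1 / 3) * (2 : ℝ) ^ ((n : ℝ) * (R - mutualInfo Q W - ε - 2 * β₂))) := by
  set M := ⌈(2 : ℝ) ^ ((n : ℝ) * R)⌉₊
  have hM : (2 : ℝ) ^ ((n : ℝ) * R) ≤ M := Nat.le_ceil _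
  have hM2 : 0 < n → 2 ≤ M := fun hn =>
    Nat.lt_ceil.2 (by exact_mod_cast Real.one_lt_rpow one_lt_two (by positivity))
  have hI : 0 ≤ mutualInfo Q W + ε := by linarith [mutualInfo_nonneg hQ hW]
  have hle_one : ∀ β : ℝ, 0 < β → (2 : ℝ) ^ (-(β * n)) ≤ 1 := fun β hβ =>
    Real.rpow_le_one_of_one_le_of_nonpos one_le_two (by have := n.cast_nonneg (α := ℝ); nlinarith)
  have hrate₁ : (2 : ℝ) ^ ((n : ℝ) * (R - β₁)) = 2 ^ ((n : ℝ) * R) * 2 ^ (-(β₁ * n)) := by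
    rw [← Real.rpow_add two_pos]
    ring_nf
  have hrate₂ : (2 : ℝ) ^ ((n : ℝ) * (R - mutualInfo Q W - ε - 2 * β₂))
      = 2 ^ ((n : ℝ) * R) * (2 ^ (-(β₂ * n))) ^ 2 / 2 ^ (n * (mutualInfo Q W + ε)) := by
    rw [← Real.rpow_natCast, ← Real.rpow_mul zero_le_two, ← Real.rpow_add two_pos,
      ← Real.rpow_sub two_pos]
    ring_nf
  have h₁ := cbP_not_sum_PC2_lt_or_not_forall_DC2_lt_le hQ hW hI hatyp (hle_one β₁ hβ₁) hM2
  have h₂ := cbP_not_forall_DC1_lt_le (n := n) (M := M) (ε := ε) hQ hW (by positivity)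
    (hle_one β₂ hβ₂)
  rw [cbP_eq_iidProb] at h₁ h₂ ⊢
  refine (iidProb_mono (prodPMF_nonneg hQ.1 n) fun C hC => ?_).trans
    ((iidProb_or_le (prodPMF_nonneg hQ.1 n) _ _).trans (add_le_add (h₁.trans ?_) (h₂.trans ?_)))
  · tauto
  · rw [Real.exp_le_exp, hrate₁]
    nlinarith [Real.rpow_pos_of_pos two_pos (-(β₁ * n))]
  · rw [hrate₂]
    gcongr
    rw [neg_mul, neg_le_neg_iff, ← mul_div_assoc, one_div_mul_eq_div, div_div, mul_comm (3 : ℝ),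
      mul_comm (2 ^ ((n : ℝ) * R))]
    gcongr
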